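/- arXiv:2603.16170 — 2 statements merged into one kernel-verified Lean document; each statement's English description precedes it below -/
import Mathlib

section
/- Let p > 1, r > 0, a < p-1, and let f be measurable on (0,∞) with ∫_0^∞ x^a |f(x)|^p dx < ∞. Define f_r(x) = (1/Γ(r)) ∫_0^x (x-t)^{r-1} f(t) dt. Then ∫_0^∞ x^a |f_r(x)/x^r|^p dx ≤ [Γ(1-(a+1)/p)/Γ(r+1-(a+1)/p)]^p ∫_0^∞ x^a |f(x)|^p dx. -/
/-! Substituting `t = x s`, `f_r(x) / x ^ r = Γ(r)⁻¹ ∫₀¹ (1 - s) ^ (r - 1) f(x s) ds` is an average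
of dilates of `f`. Hölder's inequality against the weight `s ^ (-(a + 1) / p)` (Schur's test),
Tonelli, and the homogeneity `∫₀^∞ x ^ a |f(x s)| ^ p dx = s ^ (-(a + 1)) ∫₀^∞ x ^ a |f x| ^ p dx`
bound the left-hand side by `(Γ(r)⁻¹ ∫₀¹ (1 - s) ^ (r - 1) s ^ (-(a + 1) / p) ds) ^ p` times the
right-hand integral, and that Beta integral is `B(1 - (a + 1) / p, r)`. Working with lower
Lebesgue integrals, no integrability of `f_r` is needed. -/

open MeasureTheory Real Set ENNReal

lemma setLIntegral_comp_mul_left {b : ℝ} (hb : b ≠ 0) (g : ℝ → ℝ≥0∞) (s : Set ℝ) :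
    ∫⁻ x in (b * ·) ⁻¹' s, g (b * x) = ENNReal.ofReal |b⁻¹| * ∫⁻ y in s, g y := by
  have he := measurableEmbedding_mulLeft₀ hb
  rw [← he.lintegral_map, ← he.restrict_map, Real.map_volume_mul_left hb,
    Measure.restrict_smul, lintegral_smul_measure, smul_eq_mul]

lemma setLIntegral_Ioo_zero_eq_mul {x : ℝ} (hx : 0 < x) (g : ℝ → ℝ≥0∞) :
    ∫⁻ t in Ioo 0 x, g t = ENNReal.ofReal x * ∫⁻ s in Ioo 0 1, g (x * s) := by
  have h := setLIntegral_comp_mul_left hx.ne' g (Ioo 0 x)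
  rw [preimage_const_mul_Ioo₀ _ _ hx, zero_div, div_self hx.ne'] at h
  rw [h, ← mul_assoc, ← ENNReal.ofReal_mul hx.le, abs_of_pos (inv_pos.2 hx),
    mul_inv_cancel₀ hx.ne', ENNReal.ofReal_one, one_mul]

lemma setLIntegral_Ioi_rpow_mul_comp_mul {s : ℝ} (hs : 0 < s) (a : ℝ) (g : ℝ → ℝ≥0∞) :
    ∫⁻ x in Ioi 0, ENNReal.ofReal (x ^ a) * g (x * s) =
      ENNReal.ofReal (s ^ (-(a + 1))) * ∫⁻ x in Ioi 0, ENNReal.ofReal (x ^ a) * g x := by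
  have h := setLIntegral_comp_mul_left hs.ne' (fun y => ENNReal.ofReal (y ^ a) * g y) (Ioi 0)
  rw [preimage_const_mul_Ioi₀ _ hs, zero_div, abs_of_pos (inv_pos.2 hs)] at h
  have hsplit : ∀ x ∈ Ioi (0 : ℝ), ENNReal.ofReal ((s * x) ^ a) * g (s * x) =
      ENNReal.ofReal (s ^ a) * (ENNReal.ofReal (x ^ a) * g (x * s)) := fun x hx => by
    rw [Real.mul_rpow hs.le (le_of_lt hx), ENNReal.ofReal_mul (by positivity), mul_comm x s,
      mul_assoc]
  rw [setLIntegral_congr_fun measurableSet_Ioi hsplit, lintegral_const_mul' _ _ ofReal_ne_top] at h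
  calc ∫⁻ x in Ioi 0, ENNReal.ofReal (x ^ a) * g (x * s)
      = ENNReal.ofReal (s ^ (-a)) *
          (ENNReal.ofReal (s ^ a) * ∫⁻ x in Ioi 0, ENNReal.ofReal (x ^ a) * g (x * s)) := by
        rw [← mul_assoc, ← ENNReal.ofReal_mul (by positivity), ← Real.rpow_add hs,
          neg_add_cancel, Real.rpow_zero, ENNReal.ofReal_one, one_mul]
    _ = _ := by
        rw [h, ← mul_assoc, ← ENNReal.ofReal_mul (by positivity), ← Real.rpow_neg_one,
          ← Real.rpow_add hs, neg_add]

lemma setLIntegral_Ioo_rpow_mul_one_sub_rpow {α β : ℝ} (hα : 0 < α) (hβ : 0 < β) :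
    ∫⁻ s in Ioo 0 1, ENNReal.ofReal (s ^ (α - 1) * (1 - s) ^ (β - 1)) =
      ENNReal.ofReal (ProbabilityTheory.beta α β) := by
  have h := ProbabilityTheory.lintegral_betaPDF_eq_one hα hβ
  rw [ProbabilityTheory.lintegral_betaPDF] at h
  have hB := ProbabilityTheory.beta_pos hα hβ
  simp_rw [mul_assoc, ENNReal.ofReal_mul (one_div_pos.2 hB).le] at h
  rw [lintegral_const_mul' _ _ ofReal_ne_top] at h
  calc _ = ENNReal.ofReal (ProbabilityTheory.beta α β * (1 / ProbabilityTheory.beta α β)) *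
        ∫⁻ s in Ioo 0 1, ENNReal.ofReal (s ^ (α - 1) * (1 - s) ^ (β - 1)) := by
        rw [mul_one_div_cancel hB.ne', ENNReal.ofReal_one, one_mul]
    _ = _ := by rw [ENNReal.ofReal_mul hB.le, mul_assoc, h, mul_one]

lemma lintegral_mul_rpow_le_of_weight {α : Type*} [MeasurableSpace α] {μ : Measure α} {p : ℝ}
    (hp : 1 < p) {k φ H : α → ℝ≥0∞} (hk : AEMeasurable k μ) (hφ : AEMeasurable φ μ)
    (hH : AEMeasurable H μ) (hφ0 : ∀ᵐ x ∂μ, φ x ≠ 0) (hφtop : ∀ᵐ x ∂μ, φ x ≠ ⊤) :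
    (∫⁻ x, k x * H x ∂μ) ^ p ≤
      (∫⁻ x, k x * φ x ∂μ) ^ (p - 1) * ∫⁻ x, k x * φ x ^ (1 - p) * H x ^ p ∂μ := by
  have hpq := Real.HolderConjugate.conjExponent hp
  have hp0 : 0 < p := hpq.pos
  have hp1 : 0 ≤ p - 1 := by linarith
  set F := fun x => (k x * φ x ^ (1 - p) * H x ^ p) ^ (1 / p)
  set G := fun x => (k x * φ x) ^ (1 / p)
  have hFp : ∀ x, F x ^ p = k x * φ x ^ (1 - p) * H x ^ p := fun x => by
    simp only [F, ← ENNReal.rpow_mul, one_div_mul_cancel hp0.ne', ENNReal.rpow_one]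
  have hGp : ∀ x, G x ^ p = k x * φ x := fun x => by
    simp only [G, ← ENNReal.rpow_mul, one_div_mul_cancel hp0.ne', ENNReal.rpow_one]
  have hsplit : ∀ᵐ x ∂μ, k x * H x = F x * G x ^ (p - 1) := by
    filter_upwards [hφ0, hφtop] with x h0 htop
    simp only [F, G, ENNReal.mul_rpow_of_nonneg _ _ (one_div_pos.2 hp0).le,
      ENNReal.mul_rpow_of_nonneg _ _ hp1, ← ENNReal.rpow_mul]
    calc k x * H x = (k x ^ (1 / p) * k x ^ (1 / p * (p - 1))) *
          (φ x ^ ((1 - p) * (1 / p)) * φ x ^ (1 / p * (p - 1))) * H x ^ (p * (1 / p)) := by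
          rw [← ENNReal.rpow_add_of_nonneg _ _ (by positivity) (by positivity),
            ← ENNReal.rpow_add _ _ h0 htop]
          field_simp
          simp [div_self hp0.ne']
      _ = _ := by ring
  calc (∫⁻ x, k x * H x ∂μ) ^ p = (∫⁻ x, F x * G x ^ (p - 1) ∂μ) ^ p := by
        rw [lintegral_congr_ae hsplit]
    _ ≤ ((∫⁻ x, F x ^ p ∂μ) ^ (1 / p) * (∫⁻ x, G x ^ p ∂μ) ^ (1 / (p / (p - 1)))) ^ p := by
        gcongr
        exact ENNReal.lintegral_mul_rpow_le_lintegral_rpow_mul_lintegral_rpow hpq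
          (by fun_prop) (by fun_prop)
    _ = _ := by
        rw [ENNReal.mul_rpow_of_nonneg _ _ hp0.le, ← ENNReal.rpow_mul, ← ENNReal.rpow_mul,
          one_div_mul_cancel hp0.ne', ENNReal.rpow_one, mul_comm]
        simp only [hFp, hGp]
        congr 2
        field_simp

lemma setLIntegral_Ioi_rpow_mul_dilation_rpow_le {p : ℝ} (hp : 1 < p) (a : ℝ) {S : Set ℝ}
    (hS : MeasurableSet S) (hS0 : S ⊆ Ioi 0) {k g : ℝ → ℝ≥0∞} (hk : Measurable k)
    (hg : Measurable g) :
    ∫⁻ x in Ioi 0, ENNReal.ofReal (x ^ a) * (∫⁻ s in S, k s * g (x * s)) ^ p ≤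
      (∫⁻ s in S, k s * ENNReal.ofReal s ^ (-(a + 1) / p)) ^ p *
        ∫⁻ x in Ioi 0, ENNReal.ofReal (x ^ a) * g x ^ p := by
  set φ : ℝ → ℝ≥0∞ := fun s => ENNReal.ofReal s ^ (-(a + 1) / p)
  set W := ∫⁻ s in S, k s * φ s
  set R := ∫⁻ x in Ioi 0, ENNReal.ofReal (x ^ a) * g x ^ p
  have hφ0 : ∀ s ∈ S, φ s ≠ 0 := fun s hs => by
    simp [φ, ENNReal.rpow_eq_zero_iff, (hS0 hs).out]
  have hφtop : ∀ s ∈ S, φ s ≠ ⊤ := fun s hs => by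
    simp [φ, ENNReal.rpow_eq_top_iff, (hS0 hs).out]
  have hφpow : ∀ s ∈ S, φ s ^ (1 - p) * ENNReal.ofReal (s ^ (-(a + 1))) = φ s := fun s hs => by
    rw [← ENNReal.ofReal_rpow_of_pos (hS0 hs), show -(a + 1) = -(a + 1) / p * p by field_simp,
      ENNReal.rpow_mul, ← ENNReal.rpow_add _ _ (hφ0 s hs) (hφtop s hs), sub_add_cancel,
      ENNReal.rpow_one]
  have hHolder : ∀ x, (∫⁻ s in S, k s * g (x * s)) ^ p ≤
      W ^ (p - 1) * ∫⁻ s in S, k s * φ s ^ (1 - p) * g (x * s) ^ p := fun x =>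
    lintegral_mul_rpow_le_of_weight hp (by fun_prop) (by fun_prop) (by fun_prop)
      (ae_restrict_of_forall_mem hS hφ0) (ae_restrict_of_forall_mem hS hφtop)
  calc ∫⁻ x in Ioi 0, ENNReal.ofReal (x ^ a) * (∫⁻ s in S, k s * g (x * s)) ^ p
      ≤ ∫⁻ x in Ioi 0, W ^ (p - 1) *
          ∫⁻ s in S, ENNReal.ofReal (x ^ a) * (k s * φ s ^ (1 - p) * g (x * s) ^ p) := by
        refine lintegral_mono fun x => ?_
        rw [lintegral_const_mul' _ _ ofReal_ne_top, mul_left_comm]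
        gcongr
        exact hHolder x
    _ = W ^ (p - 1) * ∫⁻ s in S, ∫⁻ x in Ioi 0,
          ENNReal.ofReal (x ^ a) * (k s * φ s ^ (1 - p) * g (x * s) ^ p) := by
        rw [lintegral_const_mul _ ?_, lintegral_lintegral_swap (by fun_prop)]
        exact Measurable.lintegral_prod_right' (f := fun z : ℝ × ℝ =>
          ENNReal.ofReal (z.1 ^ a) * (k z.2 * φ z.2 ^ (1 - p) * g (z.1 * z.2) ^ p)) (by fun_prop)
    _ = W ^ (p - 1) * ∫⁻ s in S, k s * φ s ^ (1 - p) * ENNReal.ofReal (s ^ (-(a + 1))) * R := by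
        congr 1
        refine setLIntegral_congr_fun hS fun s hs => ?_
        simp only [mul_left_comm (ENNReal.ofReal _)]
        rw [lintegral_const_mul _ (by fun_prop),
          setLIntegral_Ioi_rpow_mul_comp_mul (hS0 hs) a (g · ^ p), ← mul_assoc]
    _ = W ^ p * R := by
        conv_rhs => rw [← sub_add_cancel p 1, ENNReal.rpow_add_of_nonneg _ _ (by linarith)
          zero_le_one, ENNReal.rpow_one]
        rw [setLIntegral_congr_fun hS fun s hs => by rw [mul_assoc (k s), hφpow s hs],
          lintegral_mul_const _ (by fun_prop), ← mul_assoc]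

lemma setLIntegral_Ioo_rpow_sub_mul_eq {x : ℝ} (hx : 0 < x) (r : ℝ) (g : ℝ → ℝ≥0∞) :
    ∫⁻ t in Ioo 0 x, ENNReal.ofReal ((x - t) ^ (r - 1)) * g t =
      ENNReal.ofReal (x ^ r) * ∫⁻ s in Ioo 0 1, ENNReal.ofReal ((1 - s) ^ (r - 1)) * g (x * s) := by
  have hsplit : ∀ s ∈ Ioo (0 : ℝ) 1, ENNReal.ofReal ((x - x * s) ^ (r - 1)) * g (x * s) =
      ENNReal.ofReal (x ^ (r - 1)) * (ENNReal.ofReal ((1 - s) ^ (r - 1)) * g (x * s)) :=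
    fun s hs => by
      rw [← mul_one_sub, Real.mul_rpow hx.le (by linarith [hs.2]),
        ENNReal.ofReal_mul (by positivity), mul_assoc]
  rw [setLIntegral_Ioo_zero_eq_mul hx, setLIntegral_congr_fun measurableSet_Ioo hsplit,
    lintegral_const_mul' _ _ ofReal_ne_top, ← mul_assoc, ← ENNReal.ofReal_mul hx.le,
    Real.rpow_sub_one hx.ne', mul_div_cancel₀ _ hx.ne']

lemma enorm_integral_Ioo_rpow_sub_mul_div_le {x : ℝ} (hx : 0 < x) (r : ℝ) (f : ℝ → ℝ) :
    ‖(∫ t in Ioo 0 x, (x - t) ^ (r - 1) * f t) / x ^ r‖ₑ ≤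
      ∫⁻ s in Ioo 0 1, ENNReal.ofReal ((1 - s) ^ (r - 1)) * ‖f (x * s)‖ₑ := by
  rw [div_eq_mul_inv, enorm_mul, enorm_inv (by positivity),
    Real.enorm_of_nonneg (Real.rpow_nonneg hx.le r), ← div_eq_mul_inv]
  refine ENNReal.div_le_of_le_mul' ?_
  calc ‖∫ t in Ioo 0 x, (x - t) ^ (r - 1) * f t‖ₑ
      ≤ ∫⁻ t in Ioo 0 x, ‖(x - t) ^ (r - 1) * f t‖ₑ := enorm_integral_le_lintegral_enorm _
    _ = ∫⁻ t in Ioo 0 x, ENNReal.ofReal ((x - t) ^ (r - 1)) * ‖f t‖ₑ :=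
        setLIntegral_congr_fun measurableSet_Ioo fun t ht => by
          rw [enorm_mul, Real.enorm_of_nonneg (Real.rpow_nonneg (by linarith [ht.2]) _)]
    _ = _ := setLIntegral_Ioo_rpow_sub_mul_eq hx r _

lemma one_sub_add_one_div_pos {p a : ℝ} (hp : 0 < p) (ha : a < p - 1) :
    0 < 1 - (a + 1) / p := by
  rw [sub_pos, div_lt_one hp]
  linarith

lemma beta_div_Gamma {r : ℝ} (hr : 0 < r) (u : ℝ) :
    ProbabilityTheory.beta u r / Real.Gamma r = Real.Gamma u / Real.Gamma (u + r) := by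
  rw [ProbabilityTheory.beta]
  field_simp [(Real.Gamma_pos_of_pos hr).ne']

lemma setLIntegral_Ioi_rpow_mul_enorm_riemannLiouville_le {p r a : ℝ} (hp : 1 < p) (hr : 0 < r)
    (ha : a < p - 1) {f : ℝ → ℝ} (hf : Measurable f) :
    ∫⁻ x in Ioi 0, ENNReal.ofReal (x ^ a) *
        ‖1 / Real.Gamma r * (∫ t in Ioo 0 x, (x - t) ^ (r - 1) * f t) / x ^ r‖ₑ ^ p ≤
      ENNReal.ofReal (Real.Gamma (1 - (a + 1) / p) / Real.Gamma (r + 1 - (a + 1) / p)) ^ p *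
        ∫⁻ x in Ioi 0, ENNReal.ofReal (x ^ a) * ‖f x‖ₑ ^ p := by
  have hp0 : 0 ≤ p := by linarith
  have hc : 0 ≤ 1 / Real.Gamma r := (one_div_pos.2 (Real.Gamma_pos_of_pos hr)).le
  have hu := one_sub_add_one_div_pos (by linarith) ha
  have hkernel : ∀ s ∈ Ioo (0 : ℝ) 1,
      ENNReal.ofReal ((1 - s) ^ (r - 1)) * ENNReal.ofReal s ^ (-(a + 1) / p) =
        ENNReal.ofReal (s ^ (1 - (a + 1) / p - 1) * (1 - s) ^ (r - 1)) := fun s hs => by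
    rw [ENNReal.ofReal_rpow_of_pos hs.1,
      ← ENNReal.ofReal_mul (Real.rpow_nonneg (by linarith [hs.2]) _), mul_comm]
    ring_nf
  have hconst : 1 / Real.Gamma r * ProbabilityTheory.beta (1 - (a + 1) / p) r =
      Real.Gamma (1 - (a + 1) / p) / Real.Gamma (r + 1 - (a + 1) / p) := by
    rw [one_div_mul_eq_div, beta_div_Gamma hr]
    congr 2
    ring
  calc _ ≤ ∫⁻ x in Ioi 0, ENNReal.ofReal (1 / Real.Gamma r) ^ p * (ENNReal.ofReal (x ^ a) *
          (∫⁻ s in Ioo 0 1, ENNReal.ofReal ((1 - s) ^ (r - 1)) * ‖f (x * s)‖ₑ) ^ p) :=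
        setLIntegral_mono' measurableSet_Ioi fun x hx => by
          rw [mul_div_assoc, enorm_mul, Real.enorm_of_nonneg hc, ENNReal.mul_rpow_of_nonneg _ _ hp0,
            mul_left_comm]
          gcongr
          exact enorm_integral_Ioo_rpow_sub_mul_div_le hx r f
    _ ≤ ENNReal.ofReal (1 / Real.Gamma r) ^ p *
          ((∫⁻ s in Ioo 0 1, ENNReal.ofReal ((1 - s) ^ (r - 1)) * ENNReal.ofReal s ^ (-(a + 1) / p))
            ^ p * ∫⁻ x in Ioi 0, ENNReal.ofReal (x ^ a) * ‖f x‖ₑ ^ p) := by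
        rw [lintegral_const_mul' _ _ (by simp [hp0])]
        gcongr
        exact setLIntegral_Ioi_rpow_mul_dilation_rpow_le hp a measurableSet_Ioo Ioo_subset_Ioi_self
          (by fun_prop) hf.enorm
    _ = _ := by
        rw [setLIntegral_congr_fun measurableSet_Ioo hkernel,
          setLIntegral_Ioo_rpow_mul_one_sub_rpow hu hr, ← mul_assoc,
          ← ENNReal.mul_rpow_of_nonneg _ _ hp0, ← ENNReal.ofReal_mul hc, hconst]

lemma ofReal_rpow_mul_abs_rpow {x : ℝ} (hx : 0 ≤ x) (a : ℝ) {p : ℝ} (hp : 0 ≤ p) (y : ℝ) :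
    ENNReal.ofReal (x ^ a * |y| ^ p) = ENNReal.ofReal (x ^ a) * ‖y‖ₑ ^ p := by
  rw [ENNReal.ofReal_mul (Real.rpow_nonneg hx a),
    ← ENNReal.ofReal_rpow_of_nonneg (abs_nonneg y) hp, Real.enorm_eq_ofReal_abs]

lemma setIntegral_Ioi_rpow_mul_abs_rpow_le_of_lintegral_le {a p C : ℝ} (hp : 0 ≤ p) (hC : 0 ≤ C)
    {F G : ℝ → ℝ} (hG : IntegrableOn (fun x => x ^ a * |G x| ^ p) (Ioi 0))
    (h : ∫⁻ x in Ioi 0, ENNReal.ofReal (x ^ a) * ‖F x‖ₑ ^ p ≤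
      ENNReal.ofReal C * ∫⁻ x in Ioi 0, ENNReal.ofReal (x ^ a) * ‖G x‖ₑ ^ p) :
    ∫ x in Ioi 0, x ^ a * |F x| ^ p ≤ C * ∫ x in Ioi 0, x ^ a * |G x| ^ p := by
  have hG' : ENNReal.ofReal (∫ x in Ioi 0, x ^ a * |G x| ^ p) =
      ∫⁻ x in Ioi 0, ENNReal.ofReal (x ^ a) * ‖G x‖ₑ ^ p := by
    rw [ofReal_integral_eq_lintegral_ofReal hG (ae_restrict_of_forall_mem measurableSet_Ioi
      fun x (hx : 0 < x) => by positivity)]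
    exact setLIntegral_congr_fun measurableSet_Ioi fun x hx => ofReal_rpow_mul_abs_rpow hx.le _ hp _
  have hG0 : 0 ≤ ∫ x in Ioi 0, x ^ a * |G x| ^ p :=
    setIntegral_nonneg measurableSet_Ioi fun x (hx : 0 < x) => by positivity
  refine (le_abs_self _).trans ?_
  rw [← Real.norm_eq_abs]
  refine (norm_integral_le_lintegral_norm _).trans
    (ENNReal.toReal_le_of_le_ofReal (by positivity) ?_)
  calc _ = ∫⁻ x in Ioi 0, ENNReal.ofReal (x ^ a) * ‖F x‖ₑ ^ p :=
        setLIntegral_congr_fun measurableSet_Ioi fun x (hx : 0 < x) => by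
          rw [Real.norm_of_nonneg (by positivity), ofReal_rpow_mul_abs_rpow hx.le _ hp]
    _ ≤ _ := h
    _ = _ := by rw [ENNReal.ofReal_mul hC, hG']

theorem weighted_hardy_inequality (p r a : ℝ) (hp : 1 < p) (hr : 0 < r) (ha : a < p - 1)
    (f : ℝ → ℝ) (hf : Measurable f)
    (hint : IntegrableOn (fun x : ℝ => x ^ a * |f x| ^ p) (Set.Ioi (0 : ℝ))) :
    ∫ x in Set.Ioi (0 : ℝ),
        x ^ a *
          |(1 / Real.Gamma r) * (∫ t in Set.Ioo (0 : ℝ) x, (x - t) ^ (r - 1) * f t) / x ^ r| ^ p ≤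
      (Real.Gamma (1 - (a + 1) / p) / Real.Gamma (r + 1 - (a + 1) / p)) ^ p *
        ∫ x in Set.Ioi (0 : ℝ), x ^ a * |f x| ^ p := by
  have hp0 : 0 ≤ p := by linarith
  have hu := one_sub_add_one_div_pos (by linarith) ha
  have hC : 0 ≤ Real.Gamma (1 - (a + 1) / p) / Real.Gamma (r + 1 - (a + 1) / p) :=
    div_nonneg (Real.Gamma_nonneg_of_nonneg hu.le) (Real.Gamma_nonneg_of_nonneg (by linarith))
  refine setIntegral_Ioi_rpow_mul_abs_rpow_le_of_lintegral_le hp0 (by positivity) hint ?_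
  rw [← ENNReal.ofReal_rpow_of_nonneg hC hp0]
  exact setLIntegral_Ioi_rpow_mul_enorm_riemannLiouville_le hp hr ha hf
end

section
/- Let γ > 0 and let g be analytic on the unit disk with g ∈ B_γ. Then the map a ↦ g(a·) from the unit disk to the Banach space B_γ is analytic (complex differentiable), with derivative at a₀ given by the function z ↦ z g'(a₀ z). -/
open Filter Metric Topology
open scoped NNReal

/-! On a closed disk of radius `r` with `‖a₀‖ < r < 1` the derivative `g'` is Lipschitz, since
`g''` is bounded there. For `‖τ‖ < r - ‖a₀‖` and `‖z‖ ≤ 1` the points `a₀ z` and `(a₀ + τ) z` lie in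
that disk, so the first-order Taylor remainder of `g` between them is at most `L ‖τ z‖²`; dividing by
`τ` bounds the error of the difference quotient by `L ‖τ‖` uniformly in `z`, and the weight
`(1 - ‖z‖²)^γ` is at most `1`. -/

theorem Convex.norm_image_sub_sub_smul_deriv_le {𝕜 G : Type*} [RCLike 𝕜] [NormedAddCommGroup G]
    [NormedSpace 𝕜 G] {f : 𝕜 → G} {s : Set 𝕜} {L : ℝ≥0} {x y : 𝕜} (hs : Convex ℝ s)
    (hf : ∀ z ∈ s, DifferentiableAt 𝕜 f z) (hL : LipschitzOnWith L (deriv f) s)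
    (hx : x ∈ s) (hy : y ∈ s) :
    ‖f y - f x - (y - x) • deriv f x‖ ≤ L * ‖y - x‖ ^ 2 := by
  set t := segment ℝ x y
  have hts : t ⊆ s := hs.segment_subset hx hy
  have hderiv : ∀ z ∈ t, HasDerivWithinAt (fun w => f w - (w - x) • deriv f x)
      (deriv f z - deriv f x) t z := by
    intro z hz
    exact ((hf z (hts hz)).hasDerivAt.sub
      (((hasDerivAt_id z).sub_const x).smul_const (deriv f x))).hasDerivWithinAt.congr_deriv
      (by simp)
  have hbound : ∀ z ∈ t, ‖deriv f z - deriv f x‖ ≤ L * ‖y - x‖ := by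
    intro z hz
    calc ‖deriv f z - deriv f x‖ ≤ L * ‖z - x‖ := by
          simpa [← dist_eq_norm] using hL.dist_le_mul z (hts hz) x hx
      _ ≤ L * ‖y - x‖ := by
          gcongr
          simpa [dist_eq_norm, norm_sub_rev x y] using segment_subset_closedBall_left x y hz
  have := (convex_segment x y).norm_image_sub_le_of_norm_hasDerivWithin_le hderiv hbound
    (left_mem_segment ℝ x y) (right_mem_segment ℝ x y)
  simpa [sq, sub_right_comm, mul_assoc] using this

theorem exists_lipschitzOnWith_deriv_of_differentiableOn {E : Type*} [NormedAddCommGroup E]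
    [NormedSpace ℂ E] [CompleteSpace E] {f : ℂ → E} {U K : Set ℂ}
    (hf : DifferentiableOn ℂ f U) (hU : IsOpen U) (hK : IsCompact K) (hKc : Convex ℝ K)
    (hKU : K ⊆ U) : ∃ L : ℝ≥0, LipschitzOnWith L (deriv f) K := by
  have hf' : AnalyticOnNhd ℂ (deriv f) U := (hf.analyticOnNhd hU).deriv
  obtain ⟨C, hC⟩ := hK.exists_bound_of_continuousOn (hf'.deriv.continuousOn.mono hKU)
  refine ⟨C.toNNReal, hKc.lipschitzOnWith_of_nnnorm_deriv_le
    (fun z hz => (hf' z (hKU hz)).differentiableAt) fun z hz => ?_⟩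
  rw [← NNReal.coe_le_coe, coe_nnnorm]
  exact (hC z hz).trans (Real.le_coe_toNNReal C)

theorem norm_dilation_slope_sub_mul_deriv_le {g : ℂ → ℂ} {s : Set ℂ} {L : ℝ≥0} {a τ z : ℂ}
    (hs : Convex ℝ s) (hg : ∀ w ∈ s, DifferentiableAt ℂ g w) (hL : LipschitzOnWith L (deriv g) s)
    (ha : a * z ∈ s) (haτ : (a + τ) * z ∈ s) (hz : ‖z‖ ≤ 1) (hτ : τ ≠ 0) :
    ‖(g ((a + τ) * z) - g (a * z)) / τ - z * deriv g (a * z)‖ ≤ L * ‖τ‖ := by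
  have htaylor := hs.norm_image_sub_sub_smul_deriv_le hg hL ha haτ
  rw [show (a + τ) * z - a * z = τ * z by ring, smul_eq_mul] at htaylor
  calc ‖(g ((a + τ) * z) - g (a * z)) / τ - z * deriv g (a * z)‖
      = ‖g ((a + τ) * z) - g (a * z) - τ * z * deriv g (a * z)‖ / ‖τ‖ := by
        rw [← norm_div]; congr 1; field_simp
    _ ≤ L * ‖τ * z‖ ^ 2 / ‖τ‖ := by gcongr
    _ = L * ‖τ‖ * ‖z‖ ^ 2 := by rw [norm_mul]; field_simp
    _ ≤ L * ‖τ‖ * 1 := by gcongr; exact pow_le_one₀ (norm_nonneg z) hz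
    _ = L * ‖τ‖ := mul_one _

theorem exists_eventually_norm_dilation_slope_sub_mul_deriv_le {g : ℂ → ℂ}
    (hg : DifferentiableOn ℂ g (ball 0 1)) {a₀ : ℂ} (ha₀ : ‖a₀‖ < 1) :
    ∃ L : ℝ≥0, ∀ᶠ τ in 𝓝[≠] (0 : ℂ), ∀ z : ℂ, ‖z‖ ≤ 1 →
      ‖(g ((a₀ + τ) * z) - g (a₀ * z)) / τ - z * deriv g (a₀ * z)‖ ≤ L * ‖τ‖ := by
  obtain ⟨r, har, hr⟩ := exists_between ha₀
  obtain ⟨L, hL⟩ := exists_lipschitzOnWith_deriv_of_differentiableOn hg isOpen_ball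
    (isCompact_closedBall 0 r) (convex_closedBall 0 r) (closedBall_subset_ball hr)
  have hgr : ∀ w ∈ closedBall (0 : ℂ) r, DifferentiableAt ℂ g w := fun w hw =>
    hg.differentiableAt (isOpen_ball.mem_nhds (closedBall_subset_ball hr hw))
  have hsmall : ∀ᶠ τ in 𝓝[≠] (0 : ℂ), ‖τ‖ < r - ‖a₀‖ :=
    nhdsWithin_le_nhds (eventually_norm_sub_lt 0 (sub_pos.2 har) |>.mono fun τ => by simp)
  refine ⟨L, ?_⟩
  filter_upwards [hsmall, self_mem_nhdsWithin] with τ hτ hτ0 z hz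
  have ha : a₀ * z ∈ closedBall (0 : ℂ) r := by
    rw [mem_closedBall_zero_iff, norm_mul]
    nlinarith [norm_nonneg a₀, norm_nonneg z]
  have haτ : (a₀ + τ) * z ∈ closedBall (0 : ℂ) r := by
    rw [mem_closedBall_zero_iff, norm_mul]
    nlinarith [norm_add_le a₀ τ, norm_nonneg (a₀ + τ), norm_nonneg z]
  exact norm_dilation_slope_sub_mul_deriv_le (convex_closedBall 0 r) hgr hL ha haτ hz hτ0

theorem rpow_one_sub_norm_sq_mem_Icc {z : ℂ} (hz : ‖z‖ < 1) {γ : ℝ} (hγ : 0 ≤ γ) :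
    (1 - ‖z‖ ^ 2) ^ γ ∈ Set.Icc (0 : ℝ) 1 := by
  have h0 : 0 ≤ 1 - ‖z‖ ^ 2 := by nlinarith [norm_nonneg z]
  exact ⟨Real.rpow_nonneg h0 γ, Real.rpow_le_one h0 (by nlinarith [norm_nonneg z]) hγ⟩

theorem growth_space_dilation_analytic_general (γ : ℝ) (hγ : 0 < γ) (g : ℂ → ℂ)
    (hg : DifferentiableOn ℂ g (Metric.ball (0 : ℂ) 1))
    (a₀ : ℂ) (ha₀ : ‖a₀‖ < 1) :
    Tendsto
      (fun τ : ℂ =>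
        ⨆ z : Metric.ball (0 : ℂ) 1,
          ‖(g ((a₀ + τ) * z) - g (a₀ * z)) / τ - (z : ℂ) * deriv g (a₀ * z)‖ *
            (1 - ‖(z : ℂ)‖ ^ 2) ^ γ)
      (nhdsWithin 0 {τ : ℂ | τ ≠ 0}) (nhds 0) := by
  obtain ⟨L, hL⟩ := exists_eventually_norm_dilation_slope_sub_mul_deriv_le hg ha₀
  have hweight (z : ball (0 : ℂ) 1) : (1 - ‖(z : ℂ)‖ ^ 2) ^ γ ∈ Set.Icc (0 : ℝ) 1 :=
    rpow_one_sub_norm_sq_mem_Icc (mem_ball_zero_iff.1 z.2) hγ.le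
  refine squeeze_zero' (g := fun τ : ℂ => L * ‖τ‖) (Eventually.of_forall fun τ =>
    Real.iSup_nonneg fun z => mul_nonneg (norm_nonneg _) (hweight z).1) ?_ ?_
  · filter_upwards [hL] with τ hτ
    refine ciSup_le fun z => ?_
    calc _ ≤ L * ‖τ‖ * 1 := mul_le_mul (hτ z (mem_ball_zero_iff.1 z.2).le)
          (hweight z).2 (hweight z).1 (by positivity)
      _ = L * ‖τ‖ := mul_one _
  · simpa using tendsto_nhdsWithin_of_tendsto_nhds (tendsto_norm_zero.const_mul (L : ℝ))

/-- Analyticity of the map `a ↦ g(a·)` into the growth space `B_γ`: the difference quotient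
converges in the `B_γ` norm to the function `z ↦ z * g'(a₀ z)`. -/
theorem growth_space_dilation_analytic (γ : ℝ) (hγ : 0 < γ) (g : ℂ → ℂ)
    (hg : DifferentiableOn ℂ g (Metric.ball (0 : ℂ) 1))
    (hbdd : BddAbove (Set.range fun z : Metric.ball (0 : ℂ) 1 =>
      ‖g z‖ * (1 - ‖(z : ℂ)‖ ^ 2) ^ γ))
    (a₀ : ℂ) (ha₀ : ‖a₀‖ < 1) :
    Tendsto
      (fun τ : ℂ =>
        ⨆ z : Metric.ball (0 : ℂ) 1,
          ‖(g ((a₀ + τ) * z) - g (a₀ * z)) / τ - (z : ℂ) * deriv g (a₀ * z)‖ *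
            (1 - ‖(z : ℂ)‖ ^ 2) ^ γ)
      (nhdsWithin 0 {τ : ℂ | τ ≠ 0}) (nhds 0) :=
  growth_space_dilation_analytic_general γ hγ g hg a₀ ha₀
end
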